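/- arXiv:1509.03380 — 2 statements merged into one kernel-verified Lean document; each statement's English description precedes it below -/
import Mathlib

section
/- The homomorphism γ: Pic(G)×Pic(H)→Pic(Δ) induced by β is injective, for every choice of triangulated product Δ of G and H. -/
open scoped Classical
open Finset

section TriangulatedProduct

variable {VG VH : Type*}

/-- The column of the Laplacian matrix of `G` indexed by the vertex `w`:
its entry at `v` is `-deg v` if `v = w`, `1` if `v` is adjacent to `w`, and `0` otherwise. -/
noncomputable def lapCol (G : SimpleGraph VG) [Fintype VG] (w v : VG) : ℤ :=
  if v = w then -(((Finset.univ.filter (fun u => G.Adj v u)).card : ℤ))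
  else if G.Adj v w then 1 else 0

/-- A divisor on a finite graph is principal if it lies in the ℤ-span of the
columns of the Laplacian matrix of the graph. -/
def GraphPrincipal (G : SimpleGraph VG) [Fintype VG] (D : VG → ℤ) : Prop :=
  ∃ f : VG → ℤ, ∀ v, D v = ∑ w, f w * lapCol G w v

/-- A triangulated product of the graphs `G` and `H`: for each square
(an edge `aa'` of `G` together with an edge `bb'` of `H`) exactly one of the two
possible diagonals `{(a,b),(a',b')}`, `{(a,b'),(a',b)}` is chosen.  The structure
records the resulting symmetric "diagonal edge" relation. -/
structure TriProd (G : SimpleGraph VG) (H : SimpleGraph VH) where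
  diag : VG × VH → VG × VH → Prop
  diag_symm : ∀ u v, diag u v → diag v u
  diag_adj : ∀ a a' b b', diag (a, b) (a', b') → G.Adj a a' ∧ H.Adj b b'
  diag_choice : ∀ a a' b b', G.Adj a a' → H.Adj b b' →
    (diag (a, b) (a', b') ∧ ¬ diag (a, b') (a', b)) ∨
    (¬ diag (a, b) (a', b') ∧ diag (a, b') (a', b))

namespace TriProd

variable {G : SimpleGraph VG} {H : SimpleGraph VH}

/-- `u` and `v` form an edge of the triangulated product: a horizontal edge,
a vertical edge, or a diagonal edge. -/
def Adj (T : TriProd G H) (u v : VG × VH) : Prop :=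
  (u.2 = v.2 ∧ G.Adj u.1 v.1) ∨ (u.1 = v.1 ∧ H.Adj u.2 v.2) ∨ T.diag u v

/-- `{u, v, w}` is a triangle (2-face) of the triangulated product. -/
def IsFace (T : TriProd G H) (u v w : VG × VH) : Prop :=
  ∃ a a' b b', T.diag (a, b) (a', b') ∧
    ({u, v, w} : Finset (VG × VH)) = {(a, b), (a', b'), (a', b)}

/-- `{u, v, w}` is a triangle of the triangulated product whose diagonal edge
does not contain the vertex `x`. -/
def IsFaceAvoiding (T : TriProd G H) (u v w x : VG × VH) : Prop :=
  ∃ a a' b b', T.diag (a, b) (a', b') ∧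
    ({u, v, w} : Finset (VG × VH)) = {(a, b), (a', b'), (a', b)} ∧
    x ≠ (a, b) ∧ x ≠ (a', b')

variable [Fintype VG] [Fintype VH]

/-- The structure constant `α(e, x)` for the edge `e = {u, v}` of the
triangulated product and the vertex `x`. -/
noncomputable def alpha (T : TriProd G H) (u v x : VG × VH) : ℤ :=
  if x = u ∨ x = v then
    (if T.diag u v then 1
     else ((Finset.univ.filter (fun w => T.IsFaceAvoiding u v w x)).card : ℤ))
  else 0

/-- The divisor of the function `φ`, evaluated at the edge `{u, v}` of the
triangulated product: the sum of `φ` over the third vertices of the triangles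
containing `{u, v}`, minus `α({u,v},u) φ(u) + α({u,v},v) φ(v)`. -/
noncomputable def Div (T : TriProd G H) (φ : VG × VH → ℤ) (u v : VG × VH) : ℤ :=
  (∑ w ∈ Finset.univ.filter (fun w => T.IsFace u v w), φ w)
    - (T.alpha u v u * φ u + T.alpha u v v * φ v)

/-- A divisor on the triangulated product (a function on edges, encoded as a
function on ordered pairs of vertices) is principal if it agrees with `Div φ`
on every edge, for some `φ`. -/
def Principal (T : TriProd G H) (D : VG × VH → VG × VH → ℤ) : Prop :=
  ∃ φ : VG × VH → ℤ, ∀ u v, T.Adj u v → D u v = T.Div φ u v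

/-- A divisor on the triangulated product is Cartier if near every vertex `x`
it agrees with a principal divisor on all edges containing `x`. -/
def Cartier (T : TriProd G H) (D : VG × VH → VG × VH → ℤ) : Prop :=
  ∀ x : VG × VH, ∃ φ : VG × VH → ℤ,
    ∀ u v, T.Adj u v → (x = u ∨ x = v) → D u v = T.Div φ u v

/-- A divisor is ℚ-Cartier if some nonzero integer multiple of it is Cartier. -/
def QCartier (T : TriProd G H) (D : VG × VH → VG × VH → ℤ) : Prop :=
  ∃ m : ℤ, m ≠ 0 ∧ T.Cartier (fun u v => m * D u v)

/-- The balancing conditions for a divisor `D` on the triangulated product. -/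
def Balanced (T : TriProd G H) (D : VG × VH → VG × VH → ℤ) : Prop :=
  ∀ a : VG, ∀ b : VH,
    (∀ x x' : VG, G.Adj a x → G.Adj a x' →
      (∑ c ∈ Finset.univ.filter (fun c : VH => T.Adj (a, b) (x, c)), D (a, b) (x, c)) =
      (∑ c ∈ Finset.univ.filter (fun c : VH => T.Adj (a, b) (x', c)), D (a, b) (x', c))) ∧
    (∀ y y' : VH, H.Adj b y → H.Adj b y' →
      (∑ c ∈ Finset.univ.filter (fun c : VG => T.Adj (a, b) (c, y)), D (a, b) (c, y)) =
      (∑ c ∈ Finset.univ.filter (fun c : VG => T.Adj (a, b) (c, y')), D (a, b) (c, y')))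

end TriProd

/-- The map `β` sending a pair of divisors on `G` and `H` to a divisor on the
triangulated product: `C(a)` on vertical edges `{(a,b),(a,b')}`, `D(b)` on
horizontal edges `{(a,b),(a',b)}`, and `0` on diagonal edges. -/
noncomputable def beta (C : VG → ℤ) (D : VH → ℤ) (u v : VG × VH) : ℤ :=
  if u.1 = v.1 then C u.1 else if u.2 = v.2 then D u.2 else 0

end TriangulatedProduct


/-!
Since `β` vanishes on diagonal edges, a function `φ` with `Div φ = β(C, D) - β(C', D')` has
`Div φ = 0` on every diagonal, which says `φ(a,b) + φ(a',b') = φ(a',b) + φ(a,b')` on every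
square; as `G` and `H` are connected, this forces `φ(a,b) = f(a) + g(b)`. Every neighbour `c` of
`a` contributes exactly one triangle on the vertical edge `{(a,b),(a,b')}`, so for such `φ` the
divisor there is `∑_{c ~ a} (f(c) - f(a))`, the Laplacian of `f` at `a`, which is therefore
`C(a) - C'(a)`. Horizontal edges give `D - D'` as the Laplacian of `g` in the same way.
-/

namespace TriProd

variable {VG VH : Type*} {G : SimpleGraph VG} {H : SimpleGraph VH} (T : TriProd G H)

lemma diag_comm {u v : VG × VH} : T.diag u v ↔ T.diag v u :=
  ⟨T.diag_symm u v, T.diag_symm v u⟩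

lemma fst_ne_of_diag {u v : VG × VH} (h : T.diag u v) : u.1 ≠ v.1 :=
  (T.diag_adj u.1 v.1 u.2 v.2 h).1.ne

lemma snd_ne_of_diag {u v : VG × VH} (h : T.diag u v) : u.2 ≠ v.2 :=
  (T.diag_adj u.1 v.1 u.2 v.2 h).2.ne

lemma diag_anti_iff {a a' : VG} {b b' : VH} (ha : G.Adj a a') (hb : H.Adj b b') :
    T.diag (a, b') (a', b) ↔ ¬ T.diag (a, b) (a', b') := by
  rcases T.diag_choice a a' b b' ha hb with h | h <;> simp [h]

lemma isFaceAvoiding_congr {u v w u' v' w' : VG × VH}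
    (h : ({u, v, w} : Finset (VG × VH)) = {u', v', w'}) (x : VG × VH) :
    T.IsFaceAvoiding u v w x ↔ T.IsFaceAvoiding u' v' w' x := by
  simp only [IsFaceAvoiding, h]

lemma isFaceAvoiding_left_iff {u v w : VG × VH} :
    T.IsFaceAvoiding u v w u ↔ T.diag v w ∧ (u = (v.1, w.2) ∨ u = (w.1, v.2)) := by
  constructor
  · rintro ⟨a, a', b, b', hd, hset, hu₁, hu₂⟩
    have hmem := fun t => Finset.ext_iff.mp hset t
    simp only [Finset.mem_insert, Finset.mem_singleton] at hmem
    have := hmem u; have := hmem v; have := hmem w; have := hmem (a, b); have := hmem (a', b')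
    have := T.fst_ne_of_diag hd
    have := T.snd_ne_of_diag hd
    have := T.diag_symm _ _ hd
    grind
  · rintro ⟨hd, hu | hu⟩
    · refine ⟨w.1, v.1, w.2, v.2, T.diag_symm _ _ hd, ?_, ?_, ?_⟩ <;>
        grind [T.fst_ne_of_diag hd, T.snd_ne_of_diag hd]
    · refine ⟨v.1, w.1, v.2, w.2, hd, ?_, ?_, ?_⟩ <;>
        grind [T.fst_ne_of_diag hd, T.snd_ne_of_diag hd]

lemma isFaceAvoiding_right_iff {u v w : VG × VH} :
    T.IsFaceAvoiding u v w v ↔ T.diag u w ∧ (v = (u.1, w.2) ∨ v = (w.1, u.2)) := by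
  rw [T.isFaceAvoiding_congr (Finset.insert_comm u v {w}), isFaceAvoiding_left_iff]

lemma isFace_iff {u v w : VG × VH} :
    T.IsFace u v w ↔
      T.IsFaceAvoiding u v w u ∨ T.IsFaceAvoiding u v w v ∨ T.IsFaceAvoiding u v w w := by
  constructor
  · rintro ⟨a, a', b, b', hd, hset⟩
    have := T.fst_ne_of_diag hd
    have := T.snd_ne_of_diag hd
    have hcorner : (a', b) ∈ ({u, v, w} : Finset (VG × VH)) := by simp [hset]
    have avoid : T.IsFaceAvoiding u v w (a', b) := ⟨a, a', b, b', hd, hset, by grind, by grind⟩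
    simp only [Finset.mem_insert, Finset.mem_singleton] at hcorner
    rcases hcorner with rfl | rfl | rfl <;> simp [avoid]
  · rintro (⟨a, a', b, b', hd, hset, -⟩ | ⟨a, a', b, b', hd, hset, -⟩ |
      ⟨a, a', b, b', hd, hset, -⟩) <;> exact ⟨a, a', b, b', hd, hset⟩

lemma isFace_iff_of_diag {u v : VG × VH} (huv : T.diag u v) (w : VG × VH) :
    T.IsFace u v w ↔ w = (u.1, v.2) ∨ w = (v.1, u.2) := by
  have hw : T.IsFaceAvoiding u v w w ↔ T.IsFaceAvoiding w u v w :=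
    T.isFaceAvoiding_congr (by grind) w
  rw [isFace_iff, isFaceAvoiding_left_iff, isFaceAvoiding_right_iff, hw, isFaceAvoiding_left_iff]
  have := T.fst_ne_of_diag huv
  have := T.snd_ne_of_diag huv
  grind

lemma isFace_iff_of_not_diag {u v : VG × VH} (huv : ¬ T.diag u v) (w : VG × VH) :
    T.IsFace u v w ↔ T.IsFaceAvoiding u v w u ∨ T.IsFaceAvoiding u v w v := by
  have hw : T.IsFaceAvoiding u v w w ↔ T.IsFaceAvoiding w u v w :=
    T.isFaceAvoiding_congr (by grind) w
  rw [isFace_iff, hw, T.isFaceAvoiding_left_iff (u := w)]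
  simp [huv]

lemma not_isFaceAvoiding_both {u v w : VG × VH} (huv : u ≠ v) :
    ¬ (T.IsFaceAvoiding u v w u ∧ T.IsFaceAvoiding u v w v) := by
  rw [isFaceAvoiding_left_iff, isFaceAvoiding_right_iff]
  rintro ⟨⟨hvw, hu⟩, ⟨huw, hv⟩⟩
  have := T.fst_ne_of_diag hvw
  have := T.snd_ne_of_diag hvw
  have := T.fst_ne_of_diag huw
  have := T.snd_ne_of_diag huw
  grind

variable [Fintype VG] [Fintype VH]

lemma div_of_diag {u v : VG × VH} (huv : T.diag u v) (φ : VG × VH → ℤ) :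
    T.Div φ u v = φ (u.1, v.2) + φ (v.1, u.2) - φ u - φ v := by
  have hne : ((u.1, v.2) : VG × VH) ≠ (v.1, u.2) :=
    fun h => T.fst_ne_of_diag huv (Prod.ext_iff.mp h).1
  have faces : univ.filter (T.IsFace u v) = {(u.1, v.2), (v.1, u.2)} := by
    ext w; simp [T.isFace_iff_of_diag huv]
  rw [Div, faces, sum_pair hne]
  simp only [alpha, huv, true_or, or_true, if_true]
  ring

lemma div_of_not_diag {u v : VG × VH} (huv : ¬ T.diag u v) (hne : u ≠ v)
    (φ : VG × VH → ℤ) :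
    T.Div φ u v = ∑ w ∈ univ.filter (T.IsFaceAvoiding u v · u), (φ w - φ u)
      + ∑ w ∈ univ.filter (T.IsFaceAvoiding u v · v), (φ w - φ v) := by
  have faces : univ.filter (T.IsFace u v) =
      univ.filter (T.IsFaceAvoiding u v · u) ∪ univ.filter (T.IsFaceAvoiding u v · v) := by
    ext w; simp [T.isFace_iff_of_not_diag huv]
  have hdisj : Disjoint (univ.filter (T.IsFaceAvoiding u v · u))
      (univ.filter (T.IsFaceAvoiding u v · v)) :=
    disjoint_filter.mpr fun w _ hu hv => T.not_isFaceAvoiding_both hne ⟨hu, hv⟩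
  rw [Div, faces, sum_union hdisj]
  simp only [alpha, huv, true_or, or_true, if_true, if_false, sum_sub_distrib, sum_const,
    nsmul_eq_mul]
  ring

lemma div_add_vert (a : VG) {b b' : VH} (hb : H.Adj b b') (f : VG → ℤ) (g : VH → ℤ) :
    T.Div (fun p => f p.1 + g p.2) (a, b) (a, b') =
      ∑ c ∈ univ.filter (G.Adj a), (f c - f a) := by
  have hnd : ¬ T.diag (a, b) (a, b') := fun h => T.fst_ne_of_diag h rfl
  have hne : ((a, b) : VG × VH) ≠ (a, b') := by simp [hb.ne]
  have hA : ∑ w ∈ univ.filter (T.IsFaceAvoiding (a, b) (a, b') · (a, b)),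
      (f w.1 + g w.2 - (f a + g b)) =
        ∑ c ∈ univ.filter (fun c => T.diag (a, b') (c, b)), (f c - f a) := by
    refine sum_nbij' Prod.fst (·, b) ?_ ?_ ?_ ?_ ?_ <;>
      simp +contextual [isFaceAvoiding_left_iff, hb.ne]
  have hB : ∑ w ∈ univ.filter (T.IsFaceAvoiding (a, b) (a, b') · (a, b')),
      (f w.1 + g w.2 - (f a + g b')) =
        ∑ c ∈ univ.filter (fun c => T.diag (a, b) (c, b')), (f c - f a) := by
    refine sum_nbij' Prod.fst (·, b') ?_ ?_ ?_ ?_ ?_ <;>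
      simp +contextual [isFaceAvoiding_right_iff, hb.ne']
  rw [T.div_of_not_diag hnd hne, hA, hB, add_comm,
    ← sum_filter_add_sum_filter_not (univ.filter (G.Adj a)) (fun c => T.diag (a, b) (c, b'))]
  congr 2 <;> ext c
  · simpa using fun h => (T.diag_adj _ _ _ _ h).1
  · simp only [mem_filter, mem_univ, true_and]
    exact ⟨fun h => ⟨(T.diag_adj _ _ _ _ h).1,
        (T.diag_anti_iff (T.diag_adj _ _ _ _ h).1 hb).mp h⟩,
      fun ⟨ha, h⟩ => (T.diag_anti_iff ha hb).mpr h⟩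

lemma div_add_horiz {a a' : VG} (b : VH) (ha : G.Adj a a') (f : VG → ℤ) (g : VH → ℤ) :
    T.Div (fun p => f p.1 + g p.2) (a, b) (a', b) =
      ∑ e ∈ univ.filter (H.Adj b), (g e - g b) := by
  have hnd : ¬ T.diag (a, b) (a', b) := fun h => T.snd_ne_of_diag h rfl
  have hne : ((a, b) : VG × VH) ≠ (a', b) := by simp [ha.ne]
  have hA : ∑ w ∈ univ.filter (T.IsFaceAvoiding (a, b) (a', b) · (a, b)),
      (f w.1 + g w.2 - (f a + g b)) =
        ∑ e ∈ univ.filter (fun e => T.diag (a', b) (a, e)), (g e - g b) := by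
    refine sum_nbij' Prod.snd (a, ·) ?_ ?_ ?_ ?_ ?_ <;>
      simp +contextual [isFaceAvoiding_left_iff, ha.ne]
  have hB : ∑ w ∈ univ.filter (T.IsFaceAvoiding (a, b) (a', b) · (a', b)),
      (f w.1 + g w.2 - (f a' + g b)) =
        ∑ e ∈ univ.filter (fun e => T.diag (a, b) (a', e)), (g e - g b) := by
    refine sum_nbij' Prod.snd (a', ·) ?_ ?_ ?_ ?_ ?_ <;>
      simp +contextual [isFaceAvoiding_right_iff, ha.ne']
  rw [T.div_of_not_diag hnd hne, hA, hB, add_comm,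
    ← sum_filter_add_sum_filter_not (univ.filter (H.Adj b)) (fun e => T.diag (a, b) (a', e))]
  congr 2 <;> ext e
  · simpa using fun h => (T.diag_adj _ _ _ _ h).2
  · simp only [mem_filter, mem_univ, true_and]
    rw [T.diag_comm]
    exact ⟨fun h => ⟨(T.diag_adj _ _ _ _ h).2.symm,
        (T.diag_anti_iff ha (T.diag_adj _ _ _ _ h).2.symm).mp h⟩,
      fun ⟨he, h⟩ => (T.diag_anti_iff ha he).mpr h⟩

lemma add_eq_add_of_div_diag {φ : VG × VH → ℤ}
    (hφ : ∀ u v, T.diag u v → T.Div φ u v = 0)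
    {a a' : VG} {b b' : VH} (ha : G.Adj a a') (hb : H.Adj b b') :
    φ (a, b) + φ (a', b') = φ (a', b) + φ (a, b') := by
  rcases T.diag_choice a a' b b' ha hb with ⟨hd, -⟩ | ⟨-, hd⟩ <;>
    linarith [T.div_of_diag hd φ, hφ _ _ hd]

end TriProd

lemma sum_mul_lapCol {V : Type*} [Fintype V] (G : SimpleGraph V) (f : V → ℤ) (a : V) :
    ∑ w, f w * lapCol G w a = ∑ c ∈ univ.filter (G.Adj a), (f c - f a) := by
  have hcol : ∀ w, lapCol G w a = (if G.Adj a w then 1 else 0) -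
      if a = w then ((univ.filter (G.Adj a)).card : ℤ) else 0 := by
    intro w
    by_cases h : a = w
    · subst h; simp [lapCol]
    · simp [lapCol, h]
  simp only [hcol, mul_sub, mul_ite, mul_one, mul_zero, sum_sub_distrib, sum_ite_eq, mem_univ,
    if_true, ← sum_filter, sum_const, nsmul_eq_mul]
  ring

lemma SimpleGraph.Preconnected.eq_of_forall_adj {V α : Type*} {G : SimpleGraph V}
    (hG : G.Preconnected) {F : V → α} (h : ∀ x y, G.Adj x y → F x = F y) (x y : V) :
    F x = F y := by
  obtain ⟨p⟩ := hG x y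
  induction p with
  | nil => rfl
  | cons hxy _ ih => exact (h _ _ hxy).trans ih

lemma exists_eq_add_of_add_eq_add {VG VH M : Type*} [AddCommGroup M]
    {G : SimpleGraph VG} {H : SimpleGraph VH} (hG : G.Connected) (hH : H.Connected)
    (φ : VG × VH → M) (hφ : ∀ a a' b b', G.Adj a a' → H.Adj b b' →
      φ (a, b) + φ (a', b') = φ (a', b) + φ (a, b')) :
    ∃ (f : VG → M) (g : VH → M), φ = fun p => f p.1 + g p.2 := by
  obtain ⟨a₀⟩ := hG.nonempty
  obtain ⟨b₀⟩ := hH.nonempty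
  have hrow : ∀ a a', G.Adj a a' → ∀ b,
      φ (a, b) - φ (a', b) = φ (a, b₀) - φ (a', b₀) :=
    fun a a' ha b => hH.preconnected.eq_of_forall_adj (F := fun b => φ (a, b) - φ (a', b))
      (fun b b' hb => by rw [sub_eq_sub_iff_add_eq_add, hφ a a' b b' ha hb, add_comm]) b b₀
  have hcol : ∀ a b, φ (a, b) - φ (a, b₀) = φ (a₀, b) - φ (a₀, b₀) :=
    fun a b => hG.preconnected.eq_of_forall_adj (F := fun a => φ (a, b) - φ (a, b₀))
      (fun a a' ha => by rw [sub_eq_sub_iff_sub_eq_sub, hrow a a' ha b]) a a₀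
  refine ⟨fun a => φ (a, b₀), fun b => φ (a₀, b) - φ (a₀, b₀), funext fun p => ?_⟩
  show φ p = φ (p.1, b₀) + (φ (a₀, p.2) - φ (a₀, b₀))
  rw [← hcol, add_sub_cancel]

/-- The homomorphism `γ : Pic(G) × Pic(H) → Pic(Δ)` induced by `β`
is injective: if `β(C, D)` and `β(C', D')` are linearly equivalent on the
triangulated product `Δ`, then `C` is linearly equivalent to `C'` on `G` and
`D` is linearly equivalent to `D'` on `H`. -/
theorem gamma_injective {VG VH : Type*} [Fintype VG] [Fintype VH]
    (G : SimpleGraph VG) (H : SimpleGraph VH)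
    (hG : G.Connected) (hH : H.Connected)
    (hGe : ∃ a a', G.Adj a a') (hHe : ∃ b b', H.Adj b b')
    (T : TriProd G H)
    (C C' : VG → ℤ) (D D' : VH → ℤ)
    (h : T.Principal (fun u v => beta C D u v - beta C' D' u v)) :
    GraphPrincipal G (fun a => C a - C' a) ∧ GraphPrincipal H (fun b => D b - D' b) := by
  obtain ⟨φ, hφ⟩ := h
  have hdiag : ∀ u v, T.diag u v → T.Div φ u v = 0 := fun u v huv => by
    rw [← hφ u v (Or.inr (Or.inr huv))]
    simp [beta, T.fst_ne_of_diag huv, T.snd_ne_of_diag huv]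
  obtain ⟨f, g, rfl⟩ := exists_eq_add_of_add_eq_add hG hH φ
    fun a a' b b' => T.add_eq_add_of_div_diag hdiag
  obtain ⟨a₀, a₀', ha⟩ := hGe
  obtain ⟨b₀, b₀', hb⟩ := hHe
  refine ⟨⟨f, fun a => ?_⟩, ⟨g, fun b => ?_⟩⟩
  · rw [sum_mul_lapCol, ← T.div_add_vert a hb f g,
      ← hφ (a, b₀) (a, b₀') (Or.inr (Or.inl ⟨rfl, hb⟩))]
    simp [beta]
  · rw [sum_mul_lapCol, ← T.div_add_horiz b ha f g,
      ← hφ (a₀, b) (a₀', b) (Or.inl ⟨rfl, ha⟩)]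
    simp [beta, ha.ne]
end

section
/- Every ℚ-Cartier divisor D on a triangulated product Δ of G and H satisfies the balancing conditions. -/
open scoped Classical
open Finset

/-!
Fix a vertex `(a, b)` and write `m * D = Div φ` on the edges at `(a, b)`. For a neighbour `x` of
`a`, the edges from `(a, b)` to the column of `x` are the horizontal edge to `(x, b)` and the
diagonals to those `(x, c)` for which the square over `{a, x} × {b, c}` has the diagonal
`{(a, b), (x, c)}`; for the remaining neighbours `c` of `b` that square has the diagonal
`{(a, c), (x, b)}`, and `(a, c)` is the third vertex of a triangle on the horizontal edge. Summing
`Div φ` over these edges, every value of `φ` on the column of `x` cancels, leaving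
`∑_{c ∼ b} φ (a, c) - deg b * φ (a, b)`, which does not depend on `x`; cancelling `m` gives the
horizontal balancing condition. The vertical one is the horizontal one for the triangulated
product with the two factors exchanged.
-/

theorem Finset.sum_filter_fst_eq_and {α β M : Type*} [Fintype α] [Fintype β] [AddCommMonoid M]
    (a : α) (p : β → Prop) (f : α × β → M) :
    ∑ w ∈ univ.filter (fun w : α × β => w.1 = a ∧ p w.2), f w = ∑ b ∈ univ.filter p, f (a, b) := by
  rw [← univ_product_univ, filter_product (p := (· = a))]
  simp [sum_product, sum_filter]

theorem Finset.card_filter_fst_eq_and {α β : Type*} [Fintype α] [Fintype β] (a : α)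
    (p : β → Prop) : #(univ.filter (fun w : α × β => w.1 = a ∧ p w.2)) = #(univ.filter p) := by
  simp only [card_eq_sum_ones, sum_filter_fst_eq_and]

namespace TriProd

variable {VG VH : Type*} {G : SimpleGraph VG} {H : SimpleGraph VH}

section Swap

variable (T : TriProd G H)

def swap : TriProd H G where
  diag u v := T.diag u.swap v.swap
  diag_symm _ _ := T.diag_symm _ _
  diag_adj _ _ _ _ h := (T.diag_adj _ _ _ _ h).symm
  diag_choice b b' a a' hb ha := by
    rcases T.diag_choice a a' b b' ha hb with ⟨h, h'⟩ | ⟨h, h'⟩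
    · exact Or.inl ⟨h, fun h'' => h' (T.diag_symm _ _ h'')⟩
    · exact Or.inr ⟨h, T.diag_symm _ _ h'⟩

variable {T}

theorem adj_swap {u v : VH × VG} : T.swap.Adj u v ↔ T.Adj u.swap v.swap :=
  or_left_comm

theorem IsFace.swap {u v w : VG × VH} (h : T.IsFace u v w) :
    T.swap.IsFace u.swap v.swap w.swap := by
  obtain ⟨a, a', b, b', hd, h⟩ := h
  refine ⟨b', b, a', a, T.diag_symm _ _ hd, ?_⟩
  have := congrArg (image Prod.swap) h
  simp only [image_insert, image_singleton, Prod.swap_prod_mk] at this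
  rw [this, insert_comm]

theorem isFace_swap {u v w : VH × VG} : T.swap.IsFace u v w ↔ T.IsFace u.swap v.swap w.swap :=
  ⟨IsFace.swap, IsFace.swap⟩

theorem IsFaceAvoiding.swap {u v w x : VG × VH} (h : T.IsFaceAvoiding u v w x) :
    T.swap.IsFaceAvoiding u.swap v.swap w.swap x.swap := by
  obtain ⟨a, a', b, b', hd, h, hx, hx'⟩ := h
  refine ⟨b', b, a', a, T.diag_symm _ _ hd, ?_, ?_, ?_⟩
  · have := congrArg (image Prod.swap) h
    simp only [image_insert, image_singleton, Prod.swap_prod_mk] at this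
    rw [this, insert_comm]
  · rwa [← Prod.swap_prod_mk, Ne, Prod.swap_inj]
  · rwa [← Prod.swap_prod_mk, Ne, Prod.swap_inj]

theorem isFaceAvoiding_swap {u v w x : VH × VG} :
    T.swap.IsFaceAvoiding u v w x ↔ T.IsFaceAvoiding u.swap v.swap w.swap x.swap :=
  ⟨IsFaceAvoiding.swap, IsFaceAvoiding.swap⟩

variable [Fintype VG] [Fintype VH]

theorem alpha_swap (u v x : VH × VG) : T.swap.alpha u v x = T.alpha u.swap v.swap x.swap := by
  have hcard : #(univ.filter fun w => T.swap.IsFaceAvoiding u v w x) =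
      #(univ.filter fun w => T.IsFaceAvoiding u.swap v.swap w x.swap) :=
    card_equiv (Equiv.prodComm VH VG) fun w => by simp [isFaceAvoiding_swap]
  simp only [alpha, Prod.swap_inj, hcard]
  rfl

theorem div_swap (φ : VG × VH → ℤ) (u v : VH × VG) :
    T.swap.Div (φ ∘ Prod.swap) u v = T.Div φ u.swap v.swap := by
  rw [Div, Div, alpha_swap, alpha_swap]
  congr 1
  exact sum_equiv (Equiv.prodComm VH VG) (fun w => by simp [isFace_swap]) fun _ _ => rfl

theorem Cartier.swap {D : VG × VH → VG × VH → ℤ} (hD : T.Cartier D) :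
    T.swap.Cartier fun u v => D u.swap v.swap := by
  intro x
  obtain ⟨φ, hφ⟩ := hD x.swap
  refine ⟨φ ∘ Prod.swap, fun u v huv hx => ?_⟩
  rw [div_swap]
  exact hφ _ _ (adj_swap.1 huv) (by rcases hx with rfl | rfl <;> simp)

theorem QCartier.swap {D : VG × VH → VG × VH → ℤ} (hD : T.QCartier D) :
    T.swap.QCartier fun u v => D u.swap v.swap :=
  let ⟨m, hm, hC⟩ := hD
  ⟨m, hm, hC.swap⟩

end Swap

section Row

variable {T : TriProd G H} {a x : VG} {b c : VH} {w : VG × VH}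

theorem isFace_of_diag_iff (hd : T.diag (a, b) (x, c)) :
    T.IsFace (a, b) (x, c) w ↔ w = (x, b) ∨ w = (a, c) := by
  constructor
  · rintro ⟨A, A', B, B', hd', h⟩
    have hA := (T.diag_adj _ _ _ _ hd).1.ne
    have hB := (T.diag_adj _ _ _ _ hd).2.ne
    have hA' := (T.diag_adj _ _ _ _ hd').1.ne
    have hB' := (T.diag_adj _ _ _ _ hd').2.ne
    have h1 : (a, b) ∈ ({(A, B), (A', B'), (A', B)} : Finset (VG × VH)) := h ▸ by simp
    have h2 : (x, c) ∈ ({(A, B), (A', B'), (A', B)} : Finset (VG × VH)) := h ▸ by simp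
    have h3 : (A', B) ∈ ({(a, b), (x, c), w} : Finset (VG × VH)) := h ▸ by simp
    simp only [mem_insert, mem_singleton, Prod.ext_iff] at h1 h2 h3
    grind
  · rintro (rfl | rfl)
    · exact ⟨a, x, b, c, hd, rfl⟩
    · exact ⟨x, a, c, b, T.diag_symm _ _ hd, insert_comm _ _ _⟩

theorem eq_of_horizontal_face {A A' : VG} {B B' : VH} (hax : a ≠ x)
    (hd : T.diag (A, B) (A', B'))
    (h : ({(a, b), (x, b), w} : Finset (VG × VH)) = {(A, B), (A', B'), (A', B)}) :
    B = b ∧ w = (A', B') ∧ (A = a ∧ A' = x ∨ A = x ∧ A' = a) := by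
  have hA := (T.diag_adj _ _ _ _ hd).1.ne
  have hB := (T.diag_adj _ _ _ _ hd).2.ne
  have h1 : (a, b) ∈ ({(A, B), (A', B'), (A', B)} : Finset (VG × VH)) := h ▸ by simp
  have h2 : (x, b) ∈ ({(A, B), (A', B'), (A', B)} : Finset (VG × VH)) := h ▸ by simp
  have h3 : (A', B') ∈ ({(a, b), (x, b), w} : Finset (VG × VH)) := h ▸ by simp
  simp only [mem_insert, mem_singleton, Prod.ext_iff] at h1 h2 h3
  grind

theorem isFace_horizontal_iff (hax : a ≠ x) : T.IsFace (a, b) (x, b) w ↔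
    (w.1 = x ∧ T.diag (a, b) (x, w.2)) ∨ (w.1 = a ∧ T.diag (a, w.2) (x, b)) := by
  obtain ⟨w₁, c⟩ := w
  dsimp only
  constructor
  · rintro ⟨A, A', B, B', hd, h⟩
    obtain ⟨rfl, hw, ⟨rfl, rfl⟩ | ⟨rfl, rfl⟩⟩ := eq_of_horizontal_face hax hd h <;>
      simp only [Prod.mk.injEq] at hw <;> obtain ⟨rfl, rfl⟩ := hw
    · exact Or.inl ⟨rfl, hd⟩
    · exact Or.inr ⟨rfl, T.diag_symm _ _ hd⟩
  · rintro (⟨rfl, hd⟩ | ⟨rfl, hd⟩)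
    · exact ⟨a, w₁, b, c, hd, by rw [pair_comm]⟩
    · exact ⟨x, w₁, b, c, T.diag_symm _ _ hd, by rw [insert_comm, pair_comm]⟩

theorem isFaceAvoiding_horizontal_left_iff (hax : a ≠ x) :
    T.IsFaceAvoiding (a, b) (x, b) w (a, b) ↔ w.1 = a ∧ T.diag (a, w.2) (x, b) := by
  obtain ⟨w₁, c⟩ := w
  dsimp only
  constructor
  · rintro ⟨A, A', B, B', hd, h, hne, -⟩
    obtain ⟨rfl, hw, ⟨rfl, rfl⟩ | ⟨rfl, rfl⟩⟩ := eq_of_horizontal_face hax hd h <;>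
      simp only [Prod.mk.injEq] at hw <;> obtain ⟨rfl, rfl⟩ := hw
    · exact absurd rfl hne
    · exact ⟨rfl, T.diag_symm _ _ hd⟩
  · rintro ⟨rfl, hd⟩
    refine ⟨x, w₁, b, c, T.diag_symm _ _ hd, by rw [insert_comm, pair_comm], ?_, ?_⟩
    · simp [hax]
    · simp [(T.diag_adj _ _ _ _ hd).2.ne.symm]

theorem isFaceAvoiding_horizontal_right_iff (hax : a ≠ x) :
    T.IsFaceAvoiding (a, b) (x, b) w (x, b) ↔ w.1 = x ∧ T.diag (a, b) (x, w.2) := by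
  obtain ⟨w₁, c⟩ := w
  dsimp only
  constructor
  · rintro ⟨A, A', B, B', hd, h, hne, -⟩
    obtain ⟨rfl, hw, ⟨rfl, rfl⟩ | ⟨rfl, rfl⟩⟩ := eq_of_horizontal_face hax hd h <;>
      simp only [Prod.mk.injEq] at hw <;> obtain ⟨rfl, rfl⟩ := hw
    · exact ⟨rfl, hd⟩
    · exact absurd rfl hne
  · rintro ⟨rfl, hd⟩
    refine ⟨a, w₁, b, c, hd, by rw [pair_comm], ?_, ?_⟩
    · simp [hax.symm]
    · simp [(T.diag_adj _ _ _ _ hd).2.ne]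

theorem not_diag_horizontal : ¬T.diag (a, b) (x, b) :=
  fun h => (T.diag_adj _ _ _ _ h).2.ne rfl

variable [Fintype VH]

theorem filter_adj_row (hax : G.Adj a x) (b : VH) :
    univ.filter (fun c => T.Adj (a, b) (x, c)) =
      insert b (univ.filter fun c => T.diag (a, b) (x, c)) := by
  ext c
  rw [mem_filter, mem_insert, mem_filter]
  simp only [mem_univ, true_and, Adj]
  constructor
  · rintro (⟨h, -⟩ | ⟨h, -⟩ | h)
    · exact Or.inl h.symm
    · exact absurd h hax.ne
    · exact Or.inr h
  · rintro (rfl | h)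
    · exact Or.inl ⟨rfl, hax⟩
    · exact Or.inr (Or.inr h)

theorem disjoint_filter_diag_row (hax : G.Adj a x) (b : VH) :
    Disjoint (univ.filter fun c => T.diag (a, b) (x, c))
      (univ.filter fun c => T.diag (a, c) (x, b)) := by
  refine disjoint_filter.2 fun c _ h h' => ?_
  rcases T.diag_choice a x b c hax (T.diag_adj _ _ _ _ h).2 with ⟨-, hn⟩ | ⟨hn, -⟩
  exacts [hn h', hn h]

theorem filter_diag_row_union (hax : G.Adj a x) (b : VH) :
    (univ.filter fun c => T.diag (a, b) (x, c)) ∪ (univ.filter fun c => T.diag (a, c) (x, b)) =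
      univ.filter (H.Adj b) := by
  rw [← filter_or]
  refine filter_congr fun c _ => ⟨?_, fun h => ?_⟩
  · rintro (h | h)
    exacts [(T.diag_adj _ _ _ _ h).2, (T.diag_adj _ _ _ _ h).2.symm]
  · rcases T.diag_choice a x b c hax h with ⟨h, -⟩ | ⟨-, h⟩
    exacts [Or.inl h, Or.inr h]

variable [Fintype VG]

theorem div_of_diag_s2 (φ : VG × VH → ℤ) (hd : T.diag (a, b) (x, c)) :
    T.Div φ (a, b) (x, c) = φ (x, b) + φ (a, c) - φ (a, b) - φ (x, c) := by
  have hne : ((x, b) : VG × VH) ≠ (a, c) := by simp [(T.diag_adj _ _ _ _ hd).1.ne.symm]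
  have hfaces : univ.filter (T.IsFace (a, b) (x, c)) = {(x, b), (a, c)} := by
    ext w
    simp [isFace_of_diag_iff hd]
  rw [Div, hfaces, sum_pair hne]
  simp [alpha, hd]
  ring

theorem div_horizontal (φ : VG × VH → ℤ) (hax : a ≠ x) :
    T.Div φ (a, b) (x, b) =
      ∑ c ∈ univ.filter (fun c => T.diag (a, b) (x, c)), φ (x, c)
        + ∑ c ∈ univ.filter (fun c => T.diag (a, c) (x, b)), φ (a, c)
        - #(univ.filter (fun c => T.diag (a, c) (x, b))) * φ (a, b)
        - #(univ.filter (fun c => T.diag (a, b) (x, c))) * φ (x, b) := by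
  have hfaces : univ.filter (T.IsFace (a, b) (x, b)) =
      univ.filter (fun w => w.1 = x ∧ T.diag (a, b) (x, w.2)) ∪
        univ.filter (fun w => w.1 = a ∧ T.diag (a, w.2) (x, b)) := by
    rw [← filter_or]
    exact filter_congr fun w _ => isFace_horizontal_iff hax
  have hdisj : Disjoint (univ.filter (fun w : VG × VH => w.1 = x ∧ T.diag (a, b) (x, w.2)))
      (univ.filter (fun w => w.1 = a ∧ T.diag (a, w.2) (x, b))) :=
    disjoint_filter.2 fun w _ h h' => hax (h'.1.symm.trans h.1)
  rw [Div, hfaces, sum_union hdisj, sum_filter_fst_eq_and x fun c => T.diag (a, b) (x, c),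
    sum_filter_fst_eq_and a fun c => T.diag (a, c) (x, b)]
  simp only [alpha, true_or, or_true, if_true, not_diag_horizontal, if_false]
  rw [filter_congr fun w _ => isFaceAvoiding_horizontal_left_iff hax,
    filter_congr fun w _ => isFaceAvoiding_horizontal_right_iff hax,
    card_filter_fst_eq_and a fun c => T.diag (a, c) (x, b),
    card_filter_fst_eq_and x fun c => T.diag (a, b) (x, c)]
  ring

theorem sum_div_row (φ : VG × VH → ℤ) (hax : G.Adj a x) (b : VH) :
    ∑ c ∈ univ.filter (fun c => T.Adj (a, b) (x, c)), T.Div φ (a, b) (x, c) =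
      ∑ c ∈ univ.filter (H.Adj b), φ (a, c) - #(univ.filter (H.Adj b)) * φ (a, b) := by
  have hb : b ∉ univ.filter fun c => T.diag (a, b) (x, c) := by
    simp [not_diag_horizontal]
  rw [filter_adj_row hax, sum_insert hb, div_horizontal φ hax.ne,
    sum_congr rfl fun c hc => div_of_diag_s2 φ (mem_filter.1 hc).2,
    ← filter_diag_row_union hax, sum_union (disjoint_filter_diag_row hax b),
    card_union_of_disjoint (disjoint_filter_diag_row hax b)]
  simp only [sum_sub_distrib, sum_add_distrib, sum_const, nsmul_eq_mul]
  push_cast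
  ring

theorem QCartier.sum_row_eq {D : VG × VH → VG × VH → ℤ} (hD : T.QCartier D) (b : VH)
    {x' : VG} (hx : G.Adj a x) (hx' : G.Adj a x') :
    ∑ c ∈ univ.filter (fun c => T.Adj (a, b) (x, c)), D (a, b) (x, c) =
      ∑ c ∈ univ.filter (fun c => T.Adj (a, b) (x', c)), D (a, b) (x', c) := by
  obtain ⟨m, hm, hC⟩ := hD
  obtain ⟨φ, hφ⟩ := hC (a, b)
  have hrow : ∀ {x}, G.Adj a x →
      m * ∑ c ∈ univ.filter (fun c => T.Adj (a, b) (x, c)), D (a, b) (x, c) =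
        ∑ c ∈ univ.filter (H.Adj b), φ (a, c) - #(univ.filter (H.Adj b)) * φ (a, b) :=
    fun hx => by
      rw [mul_sum, ← sum_div_row φ hx b]
      exact sum_congr rfl fun c hc => hφ _ _ (mem_filter.1 hc).2 (Or.inl rfl)
  exact mul_left_cancel₀ hm ((hrow hx).trans (hrow hx').symm)

end Row

end TriProd

theorem qcartier_satisfies_balancing_general {VG VH : Type*} [Fintype VG] [Fintype VH]
    (G : SimpleGraph VG) (H : SimpleGraph VH)
    (T : TriProd G H)
    (D : VG × VH → VG × VH → ℤ)
    (hD : T.QCartier D) :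
    T.Balanced D := by
  intro a b
  refine ⟨fun x x' hx hx' => hD.sum_row_eq b hx hx', fun y y' hy hy' => ?_⟩
  simpa only [TriProd.adj_swap, Prod.swap_prod_mk] using hD.swap.sum_row_eq a hy hy'

/-- Every ℚ-Cartier divisor on a triangulated product of `G` and `H`
satisfies the balancing conditions. -/
theorem qcartier_satisfies_balancing {VG VH : Type*} [Fintype VG] [Fintype VH]
    (G : SimpleGraph VG) (H : SimpleGraph VH)
    (hG : G.Connected) (hH : H.Connected)
    (hGe : ∃ a a', G.Adj a a') (hHe : ∃ b b', H.Adj b b')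
    (T : TriProd G H)
    (D : VG × VH → VG × VH → ℤ) (hsymm : ∀ u v, D u v = D v u)
    (hD : T.QCartier D) :
    T.Balanced D :=
  qcartier_satisfies_balancing_general G H T D hD
end
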